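/- arXiv:1703.00840 — 2 statements merged into one kernel-verified Lean document; each statement's English description precedes it below -/
import Mathlib

section
/- For every n ∈ ℕ, the n-th coefficient of the partition function of zero-dimensional φ⁴-theory, F[−X²/2 + X⁴/4!], equals (4n−1)!!/((4!)ⁿ n!); explicitly, Σ_{k=0}^{2n} ((2(n+k)−1)!!/k!) · [X^{2(n+k)}]((X⁴/24)^k) = (4n−1)!!/(24ⁿ n!). -/
/-!
Only the `k = n` term survives: `(X⁴/24)^k = X^{4k}/24^k` has its single nonzero coefficient in
degree `4k`, which equals `2(n + k)` exactly when `k = n`.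
-/

/-- `dfac m` is the odd double factorial `(2m-1)!! = (2m)!/(2^m m!)` as a real number. -/
noncomputable def dfac (m : ℕ) : ℝ := ((2 * m).factorial : ℝ) / (2 ^ m * (m.factorial : ℝ))

open PowerSeries

theorem PowerSeries.coeff_C_mul_X_pow_pow {R : Type*} [CommSemiring R] (a : R) (m k j : ℕ) :
    coeff j ((C a * X ^ m) ^ k) = if j = m * k then a ^ k else 0 := by
  rw [mul_pow, ← map_pow, ← pow_mul, coeff_C_mul_X_pow]

theorem coeff_quartic_pow_eq_ite {R : Type*} [CommSemiring R] (a : R) (n k : ℕ) :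
    coeff (2 * (n + k)) ((C a * X ^ 4) ^ k) = if k = n then a ^ n else 0 := by
  rw [coeff_C_mul_X_pow_pow]
  by_cases h : k = n
  · rw [if_pos (by omega), if_pos h, h]
  · rw [if_neg (by omega), if_neg h]

theorem dfac_add_self (n : ℕ) :
    dfac (n + n) = ((4 * n).factorial : ℝ) / (2 ^ (2 * n) * ((2 * n).factorial : ℝ)) := by
  rw [dfac, ← two_mul, ← mul_assoc, show 2 * 2 = 4 from rfl]

/-- The `n`-th coefficient of the partition function of zero-dimensional φ⁴-theory,
`F[-X²/2 + X⁴/4!]`, equals `(4n-1)!!/((4!)^n n!)`; here `(4n-1)!!` is written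
as `(4n)!/(2^{2n}(2n)!)`. -/
theorem stmt7 (n : ℕ) :
    ∑ k ∈ Finset.range (2 * n + 1),
        dfac (n + k) / (k.factorial : ℝ) *
          PowerSeries.coeff (R := ℝ) (2 * (n + k))
            ((PowerSeries.C (R := ℝ) (1 / 24) * PowerSeries.X ^ 4) ^ k)
      = ((4 * n).factorial : ℝ) / (2 ^ (2 * n) * ((2 * n).factorial : ℝ)) /
          (24 ^ n * (n.factorial : ℝ)) := by
  simp_rw [coeff_quartic_pow_eq_ite, mul_ite, mul_zero]
  rw [Finset.sum_ite_eq' _ n, if_pos (Finset.mem_range.mpr (by omega)), dfac_add_self,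
    one_div, inv_pow]
  field_simp
end

section
/- Let sin X := Σ_{m≥0} (−1)^m X^{2m+1}/(2m+1)! ∈ ℝ[[X]] and V := (X² − (sin X)²)/2, a formal power series of order 4. Then for every n ∈ ℕ, Σ_{k=0}^{2n} ((2(n+k)−1)!!/k!) · [X^{2(n+k)}](V^k) = ((2n−1)!!)²/(2ⁿ n!). Equivalently, the partition function of the zero-dimensional sine-Gordon model, F[−sin²(X)/2](ħ), equals Σ_{n≥0} ħⁿ (2n−1)!! [X^{2n}](1−X²)^{−1/2}, which is the partition function Z₀ of zero-dimensional quantum electrodynamics. -/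
/-- The formal power series `sin X = Σ_{m≥0} (-1)^m X^{2m+1}/(2m+1)!`. -/
noncomputable def sinPS : PowerSeries ℝ :=
  PowerSeries.mk fun j => if j % 2 = 1 then (-1 : ℝ) ^ (j / 2) / (j.factorial : ℝ) else 0

open PowerSeries Finset
open scoped Nat

/-!
Write `⟨f⟩ₙ := formalIntegral V n f` for the coefficient of `ħⁿ` in the formal integral of `f`
against `exp ((-X²/2 + V)/ħ)`, a sum of Gaussian moments `(2m-1)!! [X^{2m}]`. Since Gaussian
moments turn `d/dX` into multiplication by `X` one order higher, integration by parts reads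
`⟨f'⟩ₙ = ⟨(X - V') f⟩ₙ₊₁`, and the Euler operator `X d/dX` gives the scaling relation
`2(n+1) ⟨1⟩ₙ₊₁ = ⟨X V' - 2V⟩ₙ₊₂`.

For `V = (X² - sin² X)/2` we have `X - V' = sin X cos X`. Integrating by parts then performs the
substitution `y = sin X`: `⟨sin^{2i} cos⟩_{i+p} = (2i-1)!! ⟨cos⟩ₚ`, and writing
`1 = cos X · (1 - sin² X)^{-1/2}` modulo a high power of `X` expresses every `⟨sin^{2i}⟩` through
the numbers `⟨cos⟩ₚ`. In these terms the scaling relation becomes `(2n+3) ⟨1⟩ₙ₊₁ = ⟨sin²⟩ₙ₊₂`,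
which forces `⟨cos⟩ₚ = δ_{p0}` by induction on `p`, and then
`⟨1⟩ₙ = (2n-1)!! [y^{2n}] (1-y²)^{-1/2}`.
-/

theorem dfac_zero : dfac 0 = 1 := by simp [dfac]

theorem dfac_succ (m : ℕ) : dfac (m + 1) = (2 * m + 1) * dfac m := by
  rw [dfac, dfac, show 2 * (m + 1) = 2 * m + 1 + 1 by ring, Nat.factorial_succ,
    Nat.factorial_succ, Nat.factorial_succ]
  push_cast
  field_simp
  ring

section SinCos
variable {K : Type*} [Field K] [CharZero K]

theorem PowerSeries.derivative_sin : d⁄dX K (sin K) = cos K := by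
  ext n
  obtain ⟨t, rfl | rfl⟩ := Nat.even_or_odd' n
  · have h : (2 * t + 1) / 2 = t := by omega
    have : (2 * t + 1 : K) ≠ 0 := by norm_cast
    simp [coeff_derivative, sin, cos, Nat.factorial_succ, h]
    field_simp
  · simp [coeff_derivative, sin, cos, parity_simps]

theorem PowerSeries.derivative_cos : d⁄dX K (cos K) = -sin K := by
  ext n
  obtain ⟨t, rfl | rfl⟩ := Nat.even_or_odd' n
  · simp [coeff_derivative, sin, cos, parity_simps]
  · have h : (2 * t + 1 + 1) / 2 = t + 1 := by omega
    have h' : (2 * t + 1) / 2 = t := by omega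
    have : (2 * t + 1 + 1 : K) ≠ 0 := by norm_cast
    simp [coeff_derivative, sin, cos, Nat.factorial_succ, h, h', parity_simps, pow_succ]
    field_simp

theorem PowerSeries.constantCoeff_sin : constantCoeff (sin K) = 0 := by
  simp [← coeff_zero_eq_constantCoeff_apply, sin]

theorem PowerSeries.constantCoeff_cos : constantCoeff (cos K) = 1 := by
  simp [← coeff_zero_eq_constantCoeff_apply, cos]

theorem PowerSeries.sin_sq_add_cos_sq : sin K ^ 2 + cos K ^ 2 = 1 := by
  apply derivative.ext
  · simp [derivative_sin, derivative_cos]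
    ring
  · simp [constantCoeff_sin, constantCoeff_cos]

theorem PowerSeries.X_dvd_sin : (X : K⟦X⟧) ∣ sin K := X_dvd_iff.mpr constantCoeff_sin

theorem PowerSeries.X_pow_three_dvd_X_sub_sin : (X : K⟦X⟧) ^ 3 ∣ X - sin K := by
  refine X_pow_dvd_iff.mpr fun m hm => ?_
  interval_cases m <;> simp [sin, coeff_X]

theorem PowerSeries.X_pow_succ_dvd_of_X_pow_dvd_derivative {f : K⟦X⟧} {r : ℕ}
    (hf : X ^ r ∣ d⁄dX K f) (h0 : constantCoeff f = 0) : X ^ (r + 1) ∣ f := by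
  refine X_pow_dvd_iff.mpr fun m hm => ?_
  rcases m with _ | m
  · simpa using h0
  · have h := X_pow_dvd_iff.mp hf m (by omega)
    rw [coeff_derivative, mul_eq_zero] at h
    exact h.resolve_right (by exact_mod_cast m.succ_ne_zero)

end SinCos

theorem sinPS_eq : sinPS = sin ℝ := by
  ext n
  rcases Nat.mod_two_eq_zero_or_one n with h | h <;> simp [sinPS, sin, Nat.even_iff, h]

noncomputable def gaussMoment (m : ℕ) : ℝ⟦X⟧ →ₗ[ℝ] ℝ := dfac m • coeff (2 * m)

theorem gaussMoment_apply (m : ℕ) (f : ℝ⟦X⟧) :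
    gaussMoment m f = dfac m * coeff (2 * m) f := rfl

theorem gaussMoment_eq_zero_of_X_pow_dvd {m r : ℕ} {f : ℝ⟦X⟧} (hf : X ^ r ∣ f) (hm : 2 * m < r) :
    gaussMoment m f = 0 := by
  rw [gaussMoment_apply, X_pow_dvd_iff.mp hf _ hm, mul_zero]

theorem gaussMoment_derivative (m : ℕ) (f : ℝ⟦X⟧) :
    gaussMoment m (d⁄dX ℝ f) = gaussMoment (m + 1) (X * f) := by
  rw [gaussMoment_apply, gaussMoment_apply, dfac_succ, coeff_derivative,
    show 2 * (m + 1) = 2 * m + 1 + 1 by ring, coeff_succ_X_mul]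
  push_cast
  ring

theorem gaussMoment_X_mul_derivative (m : ℕ) (f : ℝ⟦X⟧) :
    gaussMoment m (X * d⁄dX ℝ f) = 2 * m * gaussMoment m f := by
  rcases m with _ | m
  · simp [gaussMoment_apply]
  · rw [gaussMoment_apply, gaussMoment_apply, show 2 * (m + 1) = 2 * m + 1 + 1 by ring,
      coeff_succ_X_mul, coeff_derivative]
    push_cast
    ring

theorem sum_range_succ_inv_factorial_mul_natCast_mul (F : ℕ → ℝ) (M : ℕ) :
    ∑ k ∈ range (M + 1), (k ! : ℝ)⁻¹ * (k * F k) = ∑ k ∈ range M, (k ! : ℝ)⁻¹ * F (k + 1) := by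
  rw [sum_range_succ']
  refine (add_eq_left.mpr (by simp)).trans (sum_congr rfl fun k _ => ?_)
  rw [Nat.factorial_succ]
  push_cast
  field_simp

-- The truncation at `k ≤ 2n` drops no terms only when `X ^ 3 ∣ V` (`formalIntegral_eq_sum_range`).
noncomputable def formalIntegral (V : ℝ⟦X⟧) (n : ℕ) : ℝ⟦X⟧ →ₗ[ℝ] ℝ :=
  ∑ k ∈ range (2 * n + 1), (k ! : ℝ)⁻¹ • (gaussMoment (n + k)).comp (LinearMap.mulRight ℝ (V ^ k))

section FormalIntegral

variable {V : ℝ⟦X⟧}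

theorem formalIntegral_apply (n : ℕ) (f : ℝ⟦X⟧) :
    formalIntegral V n f =
      ∑ k ∈ range (2 * n + 1), (k ! : ℝ)⁻¹ * gaussMoment (n + k) (f * V ^ k) := by
  simp [formalIntegral]

theorem formalIntegral_zero_apply (f : ℝ⟦X⟧) : formalIntegral V 0 f = constantCoeff f := by
  simp [formalIntegral_apply, gaussMoment_apply, dfac_zero]

theorem gaussMoment_mul_pow_eq_zero (hV : X ^ 3 ∣ V) {f : ℝ⟦X⟧} {r n k : ℕ} (hf : X ^ r ∣ f)
    (h : 2 * (n + k) < r + 3 * k) : gaussMoment (n + k) (f * V ^ k) = 0 :=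
  gaussMoment_eq_zero_of_X_pow_dvd
    (by rw [pow_add, pow_mul]; exact mul_dvd_mul hf (pow_dvd_pow_of_dvd hV k)) h

theorem formalIntegral_eq_sum_range (hV : X ^ 3 ∣ V) {n M : ℕ} (hM : 2 * n + 1 ≤ M) (f : ℝ⟦X⟧) :
    formalIntegral V n f = ∑ k ∈ range M, (k ! : ℝ)⁻¹ * gaussMoment (n + k) (f * V ^ k) := by
  rw [formalIntegral_apply]
  refine sum_subset (range_subset_range.mpr hM) fun k _ hk => ?_
  rw [gaussMoment_mul_pow_eq_zero hV (r := 0) (by simp) (by simp at hk; omega), mul_zero]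

theorem formalIntegral_eq_zero_of_X_pow_dvd (hV : X ^ 3 ∣ V) {n : ℕ} {f : ℝ⟦X⟧}
    (hf : X ^ (2 * n + 1) ∣ f) : formalIntegral V n f = 0 := by
  rw [formalIntegral_apply]
  exact sum_eq_zero fun k _ => by rw [gaussMoment_mul_pow_eq_zero hV hf (by omega), mul_zero]

theorem formalIntegral_succ_eq_sum (hV : X ^ 3 ∣ V) {n M : ℕ} (hM : 2 * n + 3 ≤ M) (g : ℝ⟦X⟧) :
    formalIntegral V (n + 1) g =
      ∑ k ∈ range (M + 1), (k ! : ℝ)⁻¹ * (k * gaussMoment (n + k) (g * V ^ (k - 1))) := by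
  rw [sum_range_succ_inv_factorial_mul_natCast_mul, formalIntegral_eq_sum_range hV hM]
  simp only [Nat.add_sub_cancel, add_assoc, add_comm 1]

theorem formalIntegral_derivative (hV : X ^ 3 ∣ V) (n : ℕ) (f : ℝ⟦X⟧) :
    formalIntegral V n (d⁄dX ℝ f) = formalIntegral V (n + 1) ((X - d⁄dX ℝ V) * f) := by
  have hterm (k : ℕ) : gaussMoment (n + k) (d⁄dX ℝ f * V ^ k) =
      gaussMoment (n + 1 + k) (X * f * V ^ k) -
        k * gaussMoment (n + k) (f * d⁄dX ℝ V * V ^ (k - 1)) := by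
    have hprod : d⁄dX ℝ f * V ^ k =
        d⁄dX ℝ (f * V ^ k) - k • (f * d⁄dX ℝ V * V ^ (k - 1)) := by
      rw [Derivation.leibniz, derivative_pow, nsmul_eq_mul, smul_eq_mul, smul_eq_mul]
      ring
    rw [hprod, map_sub, map_nsmul, nsmul_eq_mul, gaussMoment_derivative, add_right_comm n k 1,
      mul_assoc X]
  rw [sub_mul, map_sub, formalIntegral_eq_sum_range hV (M := 2 * n + 4) (by omega),
    formalIntegral_eq_sum_range hV (M := 2 * n + 4) (by omega),
    formalIntegral_succ_eq_sum hV (M := 2 * n + 3) le_rfl, ← sum_sub_distrib]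
  refine sum_congr rfl fun k _ => ?_
  rw [hterm]
  ring_nf

theorem two_mul_succ_mul_formalIntegral_one (hV : X ^ 3 ∣ V) (n : ℕ) :
    2 * (n + 1) * formalIntegral V (n + 1) 1 = formalIntegral V (n + 2) (X * d⁄dX ℝ V - 2 * V) := by
  have hterm (k : ℕ) : 2 * (n + 1) * gaussMoment (n + 1 + k) (V ^ k) =
      k * gaussMoment (n + 1 + k) ((X * d⁄dX ℝ V - 2 * V) * V ^ (k - 1)) := by
    have hEuler := gaussMoment_X_mul_derivative (n + 1 + k) (V ^ k)
    have hpow : k * gaussMoment (n + 1 + k) (V ^ k) =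
        k * gaussMoment (n + 1 + k) (V * V ^ (k - 1)) := by
      rcases k with _ | k
      · simp
      · rw [Nat.add_sub_cancel, pow_succ']
    have hX : X * ((k : ℝ⟦X⟧) * V ^ (k - 1) * d⁄dX ℝ V) = k • (X * d⁄dX ℝ V * V ^ (k - 1)) := by
      rw [nsmul_eq_mul]
      ring
    rw [derivative_pow, hX, map_nsmul, nsmul_eq_mul] at hEuler
    push_cast at hEuler
    rw [sub_mul, map_sub, mul_assoc (2 : ℝ⟦X⟧), two_mul (V * _), map_add]
    linear_combination -hEuler - 2 * hpow
  rw [formalIntegral_eq_sum_range hV (M := 2 * n + 6) (by omega), mul_sum,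
    formalIntegral_succ_eq_sum hV (M := 2 * n + 5) (by omega)]
  refine sum_congr rfl fun k _ => ?_
  rw [one_mul, mul_left_comm, hterm]

end FormalIntegral

noncomputable def sinePotential : ℝ⟦X⟧ := C (1 / 2) * (X ^ 2 - sin ℝ ^ 2)

theorem X_pow_three_dvd_sinePotential : X ^ 3 ∣ sinePotential := by
  rw [sinePotential, sq_sub_sq]
  exact (X_pow_three_dvd_X_sub_sin.mul_left _).mul_left _

theorem two_mul_C_half : (2 : ℝ⟦X⟧) * C (1 / 2) = 1 := by
  rw [← map_ofNat C 2, ← map_mul]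
  norm_num

theorem derivative_sinePotential : d⁄dX ℝ sinePotential = X - sin ℝ * cos ℝ := by
  simp only [sinePotential, Derivation.leibniz, derivative_C, smul_eq_mul,
    map_sub, derivative_pow, derivative_X, derivative_sin]
  linear_combination (X - sin ℝ * cos ℝ) * two_mul_C_half

theorem formalIntegral_sinePotential_derivative (n : ℕ) (f : ℝ⟦X⟧) :
    formalIntegral sinePotential n (d⁄dX ℝ f) =
      formalIntegral sinePotential (n + 1) (sin ℝ * cos ℝ * f) := by
  rw [formalIntegral_derivative X_pow_three_dvd_sinePotential, derivative_sinePotential,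
    sub_sub_cancel]

theorem two_mul_add_three_mul_formalIntegral_sinePotential_one (n : ℕ) :
    (2 * n + 3) * formalIntegral sinePotential (n + 1) 1 =
      formalIntegral sinePotential (n + 2) (sin ℝ ^ 2) := by
  have hscale := two_mul_succ_mul_formalIntegral_one X_pow_three_dvd_sinePotential n
  have hIBP := formalIntegral_sinePotential_derivative (n + 1) X
  have hpot : X * d⁄dX ℝ sinePotential - 2 * sinePotential = sin ℝ ^ 2 - sin ℝ * cos ℝ * X := by
    rw [derivative_sinePotential, sinePotential]
    linear_combination -(X ^ 2 - sin ℝ ^ 2) * two_mul_C_half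
  rw [derivative_X] at hIBP
  rw [hpot, map_sub, ← hIBP] at hscale
  linear_combination hscale

-- the coefficient of `y ^ (2 * j)` in `(1 - y ^ 2) ^ (-1 / 2)`
noncomputable def invSqrtCoeff (j : ℕ) : ℝ := dfac j / (2 ^ j * j !)

theorem invSqrtCoeff_zero : invSqrtCoeff 0 = 1 := by simp [invSqrtCoeff, dfac_zero]

theorem invSqrtCoeff_succ (j : ℕ) :
    (2 * j + 2) * invSqrtCoeff (j + 1) = (2 * j + 1) * invSqrtCoeff j := by
  rw [invSqrtCoeff, invSqrtCoeff, dfac_succ, Nat.factorial_succ]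
  push_cast
  field_simp
  ring

-- a truncation of `cos X * (1 - sin² X) ^ (-1 / 2) = 1`
noncomputable def cosMulInvSqrtTrunc (N : ℕ) : ℝ⟦X⟧ :=
  cos ℝ * ∑ j ∈ range (N + 1), invSqrtCoeff j • sin ℝ ^ (2 * j)

theorem derivative_cosMulInvSqrtTrunc (N : ℕ) :
    d⁄dX ℝ (cosMulInvSqrtTrunc N) = -((2 * N + 1) * invSqrtCoeff N) • sin ℝ ^ (2 * N + 1) := by
  induction N with
  | zero => simp [cosMulInvSqrtTrunc, invSqrtCoeff_zero, derivative_cos]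
  | succ N ih =>
    have hC := congrArg C (invSqrtCoeff_succ N)
    rw [cosMulInvSqrtTrunc, sum_range_succ, mul_add, map_add, ← cosMulInvSqrtTrunc, ih,
      Derivation.leibniz, Derivation.map_smul, derivative_pow, derivative_sin, derivative_cos,
      show 2 * (N + 1) - 1 = 2 * N + 1 by omega]
    simp only [smul_eq_C_mul, smul_eq_mul, map_mul, map_add, map_natCast, map_ofNat, map_one,
      map_neg] at hC ⊢
    push_cast at hC ⊢
    linear_combination
      (C (invSqrtCoeff (N + 1)) * (2 * N + 2) * sin ℝ ^ (2 * N + 1)) * sin_sq_add_cos_sq (K := ℝ) +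
        sin ℝ ^ (2 * N + 1) * hC

theorem X_pow_dvd_cosMulInvSqrtTrunc_sub_one (N : ℕ) :
    X ^ (2 * N + 2) ∣ cosMulInvSqrtTrunc N - 1 := by
  refine X_pow_succ_dvd_of_X_pow_dvd_derivative ?_ ?_
  · rw [map_sub, derivative_one, sub_zero, derivative_cosMulInvSqrtTrunc]
    rw [smul_eq_C_mul]
    exact (pow_dvd_pow_of_dvd X_dvd_sin _).mul_left _
  · simp [cosMulInvSqrtTrunc, constantCoeff_cos, constantCoeff_sin, sum_range_succ',
      invSqrtCoeff_zero]

theorem formalIntegral_eq_sum_mul_sin_pow_mul_cos {V : ℝ⟦X⟧} (hV : X ^ 3 ∣ V) {f : ℝ⟦X⟧}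
    {m r N : ℕ} (hf : X ^ r ∣ f) (h : 2 * m < r + 2 * N + 2) :
    formalIntegral V m f =
      ∑ j ∈ range (N + 1), invSqrtCoeff j * formalIntegral V m (f * (sin ℝ ^ (2 * j) * cos ℝ)) := by
  have hdvd : X ^ (2 * m + 1) ∣ f * (cosMulInvSqrtTrunc N - 1) := by
    refine (pow_dvd_pow X (by omega : 2 * m + 1 ≤ r + (2 * N + 2))).trans ?_
    rw [pow_add]
    exact mul_dvd_mul hf (X_pow_dvd_cosMulInvSqrtTrunc_sub_one N)
  have hzero := formalIntegral_eq_zero_of_X_pow_dvd hV hdvd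
  rw [mul_sub, mul_one, map_sub, sub_eq_zero] at hzero
  rw [← hzero, cosMulInvSqrtTrunc, mul_sum, mul_sum, map_sum]
  refine sum_congr rfl fun j _ => ?_
  rw [mul_smul_comm, mul_smul_comm, map_smul, smul_eq_mul, mul_comm (cos ℝ)]

theorem formalIntegral_sin_pow_mul_cos (i p : ℕ) :
    formalIntegral sinePotential (i + p) (sin ℝ ^ (2 * i) * cos ℝ) =
      dfac i * formalIntegral sinePotential p (cos ℝ) := by
  induction i with
  | zero => simp [dfac_zero]
  | succ i ih =>
    have hder : d⁄dX ℝ (sin ℝ ^ (2 * i + 1)) = (2 * i + 1 : ℕ) • (sin ℝ ^ (2 * i) * cos ℝ) := by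
      rw [derivative_pow, derivative_sin, nsmul_eq_mul, Nat.add_sub_cancel, mul_assoc]
    have hIBP := formalIntegral_sinePotential_derivative (i + p) (sin ℝ ^ (2 * i + 1))
    rw [hder, map_nsmul, ih] at hIBP
    rw [show i + 1 + p = i + p + 1 by omega, show sin ℝ ^ (2 * (i + 1)) * cos ℝ =
      sin ℝ * cos ℝ * sin ℝ ^ (2 * i + 1) by ring, ← hIBP, dfac_succ, nsmul_eq_mul]
    push_cast
    ring

theorem formalIntegral_sin_pow (i p : ℕ) :
    formalIntegral sinePotential (i + p) (sin ℝ ^ (2 * i)) =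
      ∑ x ∈ antidiagonal p, invSqrtCoeff x.1 * dfac (i + x.1) *
        formalIntegral sinePotential x.2 (cos ℝ) := by
  rw [formalIntegral_eq_sum_mul_sin_pow_mul_cos X_pow_three_dvd_sinePotential (N := p)
    (pow_dvd_pow_of_dvd X_dvd_sin _) (by omega), Nat.sum_antidiagonal_eq_sum_range_succ_mk]
  refine sum_congr rfl fun j hj => ?_
  have hjp : j ≤ p := Nat.lt_succ_iff.mp (mem_range.mp hj)
  rw [← mul_assoc, ← pow_add, ← mul_add, show i + p = i + j + (p - j) by omega,
    formalIntegral_sin_pow_mul_cos, mul_assoc]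

theorem sum_antidiagonal_mul_eq_of_eq_ite {w a : ℕ → ℝ} {m : ℕ}
    (ha : ∀ l ≤ m, a l = if l = 0 then 1 else 0) :
    ∑ x ∈ antidiagonal m, w x.1 * a x.2 = w m := by
  rw [sum_eq_single (m, 0)]
  · simp [ha]
  · rintro ⟨j, l⟩ hx hne
    rw [HasAntidiagonal.mem_antidiagonal] at hx
    rw [ha l (by omega), if_neg (by rintro rfl; exact hne (by simp [← hx])), mul_zero]
  · simp

theorem sum_antidiagonal_succ_mul_eq_of_eq_ite {w a : ℕ → ℝ} {m : ℕ}
    (ha : ∀ l ≤ m, a l = if l = 0 then 1 else 0) :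
    ∑ x ∈ antidiagonal (m + 1), w x.1 * a x.2 = w 0 * a (m + 1) + w (m + 1) := by
  rw [Nat.sum_antidiagonal_succ, sum_antidiagonal_mul_eq_of_eq_ite (w := fun j => w (j + 1)) ha]

theorem formalIntegral_sinePotential_cos (p : ℕ) :
    formalIntegral sinePotential p (cos ℝ) = if p = 0 then 1 else 0 := by
  suffices ∀ m, ∀ l ≤ m, formalIntegral sinePotential l (cos ℝ) = if l = 0 then 1 else 0 from
    this p p le_rfl
  intro m
  induction m with
  | zero =>
    intro l hl
    rw [Nat.le_zero.mp hl, formalIntegral_zero_apply, constantCoeff_cos, if_pos rfl]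
  | succ m ih =>
    intro l hl
    rcases Nat.lt_or_eq_of_le hl with hl | rfl
    · exact ih l (by omega)
    have hZ := formalIntegral_sin_pow 0 (m + 1)
    have hS := formalIntegral_sin_pow 1 (m + 1)
    rw [sum_antidiagonal_succ_mul_eq_of_eq_ite (w := fun j => invSqrtCoeff j * dfac (0 + j)) ih]
      at hZ
    rw [sum_antidiagonal_succ_mul_eq_of_eq_ite (w := fun j => invSqrtCoeff j * dfac (1 + j)) ih]
      at hS
    rw [show 1 + (m + 1) = m + 2 by omega] at hS
    simp only [zero_add, mul_zero, pow_zero] at hZ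
    have hrel := two_mul_add_three_mul_formalIntegral_sinePotential_one m
    have hd1 : dfac 1 = 1 := by simpa [dfac_zero] using dfac_succ 0
    have hd2 : dfac (m + 2) = (2 * (m + 1 : ℕ) + 1) * dfac (m + 1) := dfac_succ (m + 1)
    rw [hZ, hS, hd2] at hrel
    simp only [add_zero, invSqrtCoeff_zero, dfac_zero, hd1, one_mul] at hrel
    push_cast at hrel
    have hzero : (2 * m + 2 : ℝ) * formalIntegral sinePotential (m + 1) (cos ℝ) = 0 := by
      linear_combination hrel
    rw [if_neg (by omega)]
    exact (mul_eq_zero.mp hzero).resolve_left (by positivity)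

theorem formalIntegral_sinePotential_one (n : ℕ) :
    formalIntegral sinePotential n 1 = dfac n ^ 2 / (2 ^ n * n !) := by
  have h := formalIntegral_sin_pow 0 n
  rw [sum_antidiagonal_mul_eq_of_eq_ite (w := fun j => invSqrtCoeff j * dfac (0 + j))
    (fun l _ => formalIntegral_sinePotential_cos l)] at h
  rw [mul_zero, pow_zero, zero_add] at h
  rw [h, invSqrtCoeff]
  ring

/-- With `V = (X² - sin²X)/2` (a series of order 4), the `n`-th coefficient of the
partition function of the zero-dimensional sine-Gordon model `F[-sin²(X)/2]` equals
`((2n-1)!!)²/(2^n n!)`, the `n`-th coefficient of the partition function of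
zero-dimensional QED. -/
theorem stmt9 (n : ℕ) :
    ∑ k ∈ Finset.range (2 * n + 1),
        dfac (n + k) / (k.factorial : ℝ) *
          PowerSeries.coeff (R := ℝ) (2 * (n + k))
            ((PowerSeries.C (R := ℝ) (1 / 2) * (PowerSeries.X ^ 2 - sinPS ^ 2)) ^ k)
      = (dfac n) ^ 2 / (2 ^ n * (n.factorial : ℝ)) := by
  rw [← formalIntegral_sinePotential_one, formalIntegral_apply, sinPS_eq]
  refine sum_congr rfl fun k _ => ?_
  rw [one_mul, gaussMoment_apply, sinePotential]
  ring
end
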